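/- In any S-Motzkin path, at every prefix, the number of H steps seen so far is at least the number of U steps seen so far, and exceeds it by at most 1. -/

import Mathlib

inductive Step : Type | H | U | D
deriving DecidableEq, Repr

def OneUBetweenH (w : List Step) : Prop :=
  ∀ p mid s : List Step, w = p ++ Step.H :: mid ++ Step.H :: s →
    Step.H ∉ mid → mid.count Step.U = 1

def DCond (w : List Step) : Prop :=
  ∀ p s : List Step, w = p ++ Step.D :: s →
    p.count Step.D + 1 ≤ p.count Step.H ∧ p.count Step.D + 1 ≤ p.count Step.U

def IsMotzkin (w : List Step) : Prop :=
  w.count Step.U = w.count Step.D ∧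
  ∀ p : List Step, p <+: w → p.count Step.D ≤ p.count Step.U

def IsSMotzkin (n : ℕ) (w : List Step) : Prop :=
  IsMotzkin w ∧ w.count Step.H = n ∧ w.count Step.U = n ∧ w.count Step.D = n ∧
  (w ≠ [] → w.head? = some Step.H) ∧ OneUBetweenH w ∧ DCond w

/-!
Cutting the path just before any H step leaves a prefix with as many U steps as H steps:
the path starts with H and each gap between consecutive H steps contributes one H and one U.
A general prefix ends with a last H followed by an H-free stretch, which holds at most one U:
either it lies inside a gap between two H steps, or it runs to the end of the path, where the
totals of H and U agree.
-/

theorem List.eq_append_cons_of_mem_of_notMem_right {α : Type*} {a : α} {l : List α}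
    (h : a ∈ l) : ∃ q t, l = q ++ a :: t ∧ a ∉ t := by
  obtain ⟨as, bs, hrev, has⟩ := List.eq_append_cons_of_mem (List.mem_reverse.mpr h)
  refine ⟨bs.reverse, as.reverse, ?_, by simpa using has⟩
  simpa using congrArg List.reverse hrev

namespace SMotzkin

open Step

variable {w : List Step}

theorem eq_nil_of_H_notMem (hhead : w ≠ [] → w.head? = some H) {q r : List Step}
    (hw : w = q ++ r) (hq : H ∉ q) : q = [] := by
  cases q with
  | nil => rfl
  | cons a q =>
    have : some a = some H := by simpa [hw] using hhead (by simp [hw])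
    simp_all

theorem count_U_eq_count_H_of_append_H (hhead : w ≠ [] → w.head? = some H)
    (hone : OneUBetweenH w) (q s : List Step) (hw : w = q ++ H :: s) :
    q.count U = q.count H := by
  by_cases hq : H ∈ q
  · obtain ⟨q', t, rfl, ht⟩ := List.eq_append_cons_of_mem_of_notMem_right hq
    have hgap : t.count U = 1 := hone q' t s (by simp [hw]) ht
    have hbefore : q'.count U = q'.count H :=
      count_U_eq_count_H_of_append_H hhead hone q' (t ++ H :: s) (by simp [hw])
    simp [List.count_append, List.count_eq_zero.mpr ht, hgap, hbefore]
  · simp [eq_nil_of_H_notMem hhead hw hq]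
termination_by q.length

theorem count_U_le_one_of_H_notMem (hhead : w ≠ [] → w.head? = some H)
    (hone : OneUBetweenH w) (hbal : w.count U = w.count H) {q t s : List Step}
    (hw : w = q ++ H :: t ++ s) (ht : H ∉ t) : t.count U ≤ 1 := by
  by_cases hs : H ∈ s
  · obtain ⟨a, b, rfl, ha⟩ := List.eq_append_cons_of_mem hs
    have hgap : (t ++ a).count U = 1 := hone q (t ++ a) b (by simp [hw]) (by simp [ht, ha])
    rw [List.count_append] at hgap
    omega
  · have hq := count_U_eq_count_H_of_append_H hhead hone q (t ++ s) (by simp [hw])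
    simp only [hw, List.count_append, List.count_cons_self,
      List.count_cons_of_ne (by decide : H ≠ U), List.count_eq_zero.mpr ht,
      List.count_eq_zero.mpr hs] at hbal
    omega

end SMotzkin

open SMotzkin in
theorem smotzkin_prefix_H_U (n : ℕ) (w : List Step) (hw : IsSMotzkin n w) :
    ∀ p : List Step, p <+: w →
      p.count Step.U ≤ p.count Step.H ∧ p.count Step.H ≤ p.count Step.U + 1 := by
  obtain ⟨-, hH, hU, -, hhead, hone, -⟩ := hw
  rintro p ⟨s, rfl⟩
  by_cases hp : Step.H ∈ p
  · obtain ⟨q, t, rfl, ht⟩ := List.eq_append_cons_of_mem_of_notMem_right hp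
    have hq := count_U_eq_count_H_of_append_H hhead hone q (t ++ s) (by simp)
    have htU := count_U_le_one_of_H_notMem hhead hone (hU.trans hH.symm) rfl ht
    simp only [List.count_append, List.count_cons_self,
      List.count_cons_of_ne (by decide : Step.H ≠ Step.U), List.count_eq_zero.mpr ht]
    omega
  · simp [eq_nil_of_H_notMem hhead rfl hp]
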